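/- Let L/K be a finite separable extension that is not tamely ramified, so its conductor c = c(L/K) > 1, with a complete-intersection presentation O_L = O_K[X_1,…,X_n]/(f_1,…,f_n) and Ω^1_{O_L/O_K} ≅ ⊕_{i=1}^r O_L/π_L^{α_i}O_L. Then for any rational a > 1 with ea > α_i for all i (where e is the ramification index of L/K), the map f^a : X^a → D^{n,(a)} induced by (f_1,…,f_n) is étale; that is, for every point x ∈ X^a(Ω), the Jacobian determinant det(f′(x)) is nonzero. -/

import Mathlib

section ValAux

variable {Ω : Type*} [Field Ω] (v : Ω → WithTop ℚ)
  (hvtop : ∀ x, v x = ⊤ ↔ x = 0)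
  (hvmul : ∀ x y, v (x * y) = v x + v y)
  (hvadd : ∀ x y, min (v x) (v y) ≤ v (x + y))

include hvtop hvmul in
lemma val_one'aux : v 1 = 0 := by
  have h := hvmul 1 1
  rw [mul_one] at h
  have h1 : v 1 ≠ ⊤ := by simp [hvtop]
  lift v 1 to ℚ using h1 with q hq
  have : q = q + q := by exact_mod_cast h
  have : q = 0 := by linarith
  simp [this]

include hvtop hvmul in
lemma val_neg'aux : ∀ x, v (-x) = v x := by
  intro x
  have hm : v (-1 : Ω) = 0 := by
    have h := hvmul (-1) (-1)
    rw [neg_mul_neg, one_mul, val_one'aux v hvtop hvmul] at h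
    have h1 : v (-1 : Ω) ≠ ⊤ := by simp [hvtop]
    lift v (-1 : Ω) to ℚ using h1 with q hq
    have : (0 : ℚ) = q + q := by exact_mod_cast h
    have : q = 0 := by linarith
    simp [this]
  have := hvmul (-1) x
  rw [neg_one_mul, hm, zero_add] at this
  exact this

include hvtop hvmul hvadd in
lemma val_add_eq_of_lt'aux {x y : Ω} (h : v x < v y) : v (x + y) = v x := by
  refine le_antisymm ?_ ?_
  · by_contra hc
    push_neg at hc
    have h2 : v x = v ((x + y) + (-y)) := by ring_nf
    have h3 : min (v (x+y)) (v (-y)) ≤ v x := h2 ▸ hvadd (x+y) (-y)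
    rw [val_neg'aux v hvtop hvmul] at h3
    rcases min_le_iff.mp h3 with h4 | h4
    · exact absurd h4 (not_le.mpr hc)
    · exact absurd h4 (not_le.mpr h)
  · have := hvadd x y
    rwa [min_eq_left h.le] at this

include hvtop hvmul in
lemma val_pow'aux : ∀ (x : Ω) (k : ℕ), v (x ^ k) = k • v x := by
  intro x k
  induction k with
  | zero => rw [pow_zero, val_one'aux v hvtop hvmul, zero_nsmul]
  | succ k ih => rw [pow_succ, hvmul, ih, succ_nsmul]

lemma nsmul_top_aux {k : ℕ} (hk : k ≠ 0) : k • (⊤ : WithTop ℚ) = ⊤ := by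
  cases k with
  | zero => simp at hk
  | succ k => rw [succ_nsmul]; exact add_top _

lemma nsmul_coe_aux (k : ℕ) (q : ℚ) : k • ((q : WithTop ℚ)) = (((k : ℚ) * q : ℚ) : WithTop ℚ) := by
  induction k with
  | zero => simp
  | succ k ih =>
      rw [succ_nsmul, ih, ← WithTop.coe_add]
      norm_cast
      push_cast
      ring

end ValAux

set_option maxHeartbeats 2000000 in
set_option synthInstance.maxHeartbeats 400000 in
theorem jacobian_nonvanishing_on_Xa
    (A : Type*) [CommRing A] [IsDomain A] [IsDiscreteValuationRing A]
    [IsAdicComplete (IsLocalRing.maximalIdeal A) A]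
    (B : Type*) [CommRing B] [IsDomain B] [IsDiscreteValuationRing B]
    [Algebra A B] [Module.Finite A B] [Module.Free A B]
    -- the complete-intersection presentation `O_L = O_K[X_1,…,X_n]/(f_1,…,f_n)`
    (n : ℕ) (f : Fin n → MvPolynomial (Fin n) A)
    (pres : (MvPolynomial (Fin n) A ⧸ Ideal.span (Set.range f)) ≃ₐ[A] B)
    -- `e` is the ramification index
    (e : ℕ) (he : Ideal.map (algebraMap A B) (IsLocalRing.maximalIdeal A)
      = (IsLocalRing.maximalIdeal B) ^ e)
    -- `Ω^1_{O_L/O_K} ≅ ⊕_{i=1}^r O_L/π_L^{α_i} O_L`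
    (r : ℕ) (α : Fin r → ℕ)
    (hΩ : Nonempty ((Ω[B⁄A]) ≃ₗ[B]
      ((i : Fin r) → B ⧸ (IsLocalRing.maximalIdeal B ^ α i))))
    -- `Ω` is (the integral closure of `O_K` in) a separable closure, with valuation `v`
    (Ω : Type*) [Field Ω] [Algebra A Ω]
    (v : Ω → WithTop ℚ)
    (hvtop : ∀ x, v x = ⊤ ↔ x = 0)
    (hvmul : ∀ x y, v (x * y) = v x + v y)
    (hvadd : ∀ x y, min (v x) (v y) ≤ v (x + y))
    (π : A) (hπ : Irreducible π) (hvπ : v (algebraMap A Ω π) = 1)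
    (hvint : ∀ b : A, 0 ≤ v (algebraMap A Ω b))
    -- the rational number `a`
    (a : ℚ) (ha : 1 < a) (hα : ∀ i, (α i : ℚ) < (e : ℚ) * a) :
    -- `f^a : X^a → D^{n,(a)}` is étale: the Jacobian does not vanish on `X^a(Ω)`
    ∀ x : Fin n → Ω,
      (∀ j, 0 ≤ v (x j)) →
      (∀ i, (a : WithTop ℚ) ≤ v (MvPolynomial.aeval x (f i))) →
      Matrix.det (Matrix.of fun i j =>
        MvPolynomial.aeval x (MvPolynomial.pderiv j (f i))) ≠ 0 := by
  classical
  intro x hx hfa hdet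
  -- ## The integer ring `O ⊆ Ω` and the ideal `I_a`
  let O : Subalgebra A Ω :=
  { carrier := {z | 0 ≤ v z}
    mul_mem' := fun {p q} hp hq => by
      simp only [Set.mem_setOf_eq] at *
      rw [hvmul]; exact add_nonneg hp hq
    one_mem' := by
      simp only [Set.mem_setOf_eq]
      rw [val_one'aux v hvtop hvmul]
    add_mem' := fun {p q} hp hq => le_trans (le_min hp hq) (hvadd p q)
    zero_mem' := by
      simp only [Set.mem_setOf_eq]
      rw [(hvtop 0).mpr rfl]; exact le_top
    algebraMap_mem' := hvint }
  have hmemO : ∀ z : Ω, z ∈ O ↔ 0 ≤ v z := fun z => Iff.rfl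
  let Ia : Ideal O :=
  { carrier := {z | (a : WithTop ℚ) ≤ v (z : Ω)}
    add_mem' := fun {p q} hp hq => le_trans (le_min hp hq) (hvadd p q)
    zero_mem' := by
      simp only [Set.mem_setOf_eq, ZeroMemClass.coe_zero]
      rw [(hvtop 0).mpr rfl]; exact le_top
    smul_mem' := fun c z hz => by
      simp only [Set.mem_setOf_eq, smul_eq_mul, MulMemClass.coe_mul] at *
      rw [hvmul]
      calc (a : WithTop ℚ) = 0 + a := (zero_add _).symm
        _ ≤ v (c : Ω) + v (z : Ω) := add_le_add c.2 hz }
  have hmemIa : ∀ z : O, z ∈ Ia ↔ (a : WithTop ℚ) ≤ v (z : Ω) := fun z => Iff.rfl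
  let R := O ⧸ Ia
  let mk' : O →+* R := Ideal.Quotient.mk Ia
  -- points as elements of O
  let X' : Fin n → O := fun j => ⟨x j, hx j⟩
  -- `ψ : A[X] → R`
  let ψ : MvPolynomial (Fin n) A →ₐ[A] R :=
    MvPolynomial.aeval (fun j => mk' (X' j))
  have hψmk : ∀ p : MvPolynomial (Fin n) A,
      ψ p = mk' (MvPolynomial.aeval X' p) := by
    intro p
    have h := MvPolynomial.comp_aeval (f := X') (φ := Ideal.Quotient.mkₐ A Ia)
    exact (AlgHom.congr_fun h p).symm
  have hOval : ∀ p : MvPolynomial (Fin n) A,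
      ((MvPolynomial.aeval X' p : O) : Ω) = MvPolynomial.aeval x p := by
    intro p
    have h := MvPolynomial.comp_aeval (f := X') (φ := O.val)
    have h2 := AlgHom.congr_fun h p
    exact h2
  have hψ0 : ∀ p ∈ Ideal.span (Set.range f), ψ p = 0 := by
    intro p hp
    refine Submodule.span_induction ?_ ?_ ?_ ?_ hp
    · rintro q ⟨i, rfl⟩
      rw [hψmk]
      rw [Ideal.Quotient.eq_zero_iff_mem, hmemIa, hOval]
      exact hfa i
    · simp
    · intro p q _ _ hp hq; rw [map_add, hp, hq, add_zero]
    · intro c q _ hq; rw [smul_eq_mul, map_mul, hq, mul_zero]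
  -- `φ : B → R`
  let φ : B →ₐ[A] R :=
    (Ideal.Quotient.liftₐ (Ideal.span (Set.range f)) ψ hψ0).comp
      (pres.symm : B ≃ₐ[A] _).toAlgHom
  have hφF : ∀ p : MvPolynomial (Fin n) A,
      φ (pres (Ideal.Quotient.mk _ p)) = ψ p := by
    intro p
    show (Ideal.Quotient.liftₐ _ ψ hψ0) (pres.symm (pres (Ideal.Quotient.mk _ p))) = ψ p
    rw [AlgEquiv.symm_apply_apply, Ideal.Quotient.liftₐ_apply]
    rfl
  -- ## The presentation of `B` over `A`
  let F : MvPolynomial (Fin n) A →ₐ[A] B :=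
    (pres : _ ≃ₐ[A] B).toAlgHom.comp (Ideal.Quotient.mkₐ A _)
  have hFsurj : Function.Surjective F :=
    pres.surjective.comp Ideal.Quotient.mk_surjective
  let G : Algebra.Generators A B (Fin n) := Algebra.Generators.ofAlgHom F hFsurj
  have hGaeval : (MvPolynomial.aeval G.val : MvPolynomial (Fin n) A →ₐ[A] B) = F := by
    ext1 j
    simp [G, Algebra.Generators.ofAlgHom, MvPolynomial.aeval_X]
  have hGker : G.ker = Ideal.span (Set.range f) := by
    have hFmk : ∀ p, F p = pres (Ideal.Quotient.mk (Ideal.span (Set.range f)) p) :=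
      fun _ => rfl
    rw [Algebra.Generators.ker_eq_ker_aeval_val, hGaeval]
    ext p
    rw [RingHom.mem_ker]
    have : (F p = 0) ↔ p ∈ Ideal.span (Set.range f) := by
      rw [hFmk p, EmbeddingLike.map_eq_zero_iff, Ideal.Quotient.eq_zero_iff_mem]
    exact this
  let P : Algebra.Presentation A B (Fin n) (Fin n) :=
  { toGenerators := G
    relation := f
    span_range_relation_eq_ker := hGker.symm }
  have hf0 : ∀ i, MvPolynomial.aeval G.val (f i) = 0 := fun i => P.aeval_val_relation i
  have hφaeval : ∀ p : MvPolynomial (Fin n) A,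
      φ (MvPolynomial.aeval G.val p) = ψ p := by
    intro p
    rw [show (MvPolynomial.aeval G.val p : B) = F p from AlgHom.congr_fun hGaeval p]
    exact hφF p
  -- ## `π_B` and `N`
  obtain ⟨πB, hπB⟩ := IsDiscreteValuationRing.exists_irreducible B
  have hmB : IsLocalRing.maximalIdeal B = Ideal.span {πB} := hπB.maximalIdeal_eq
  set N : ℕ := Finset.univ.sup α with hN
  -- `π_B ^ N` kills `Ω[B⁄A]`
  have hkill : ∀ m : Ω[B⁄A], (πB ^ N) • m = 0 := by
    intro m
    obtain ⟨eΩ⟩ := hΩ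
    rw [← map_eq_zero_iff eΩ eΩ.injective, map_smul]
    funext i
    have hle : α i ≤ N := Finset.le_sup (Finset.mem_univ i)
    have hmem : πB ^ N ∈ IsLocalRing.maximalIdeal B ^ α i := by
      have h1 : πB ^ α i ∈ IsLocalRing.maximalIdeal B ^ α i :=
        Ideal.pow_mem_pow (by rw [hmB]; exact Ideal.mem_span_singleton_self πB) _
      have : πB ^ N = πB ^ α i * πB ^ (N - α i) := by
        rw [← pow_add, Nat.add_sub_cancel' hle]
      rw [this]
      exact Ideal.mul_mem_right _ _ h1
    show (πB ^ N) • (eΩ m i) = 0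
    obtain ⟨b, hb⟩ := Submodule.Quotient.mk_surjective _ (eΩ m i)
    rw [← hb, ← Submodule.Quotient.mk_smul, Submodule.Quotient.mk_eq_zero, smul_eq_mul]
    exact Ideal.mul_mem_right b _ hmem
  -- ## Key step: `π_B ^ N · e_j` lies in the row span of the Jacobian over `B`
  have hkey : ∀ j : Fin n, ∃ C : Fin n → B, ∀ j' : Fin n,
      (if j = j' then πB ^ N else 0)
        = ∑ i, C i * MvPolynomial.aeval G.val (MvPolynomial.pderiv j' (f i)) := by
    intro j
    have h0 : G.toExtension.toKaehler ((πB ^ N) • G.cotangentSpaceBasis j) = 0 := by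
      rw [map_smul]
      exact hkill _
    obtain ⟨c, hc⟩ :=
      (Algebra.Extension.exact_cotangentComplex_toKaehler (P := G.toExtension) _).mp h0
    obtain ⟨yk, rfl⟩ := Algebra.Extension.Cotangent.mk_surjective c
    have hyk : (yk.1 : MvPolynomial (Fin n) A) ∈ Ideal.span (Set.range f) :=
      hGker.le yk.2
    obtain ⟨cc, hcc⟩ :=
      (Submodule.mem_span_range_iff_exists_fun (R := MvPolynomial (Fin n) A)
        (M := MvPolynomial (Fin n) A) (v := f) (x := yk.1)).mp hyk
    refine ⟨fun i => MvPolynomial.aeval G.val (cc i), fun j' => ?_⟩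
    rw [Algebra.Extension.cotangentComplex_mk] at hc
    have hrepr := congrArg (fun z => (G.cotangentSpaceBasis.repr z) j') hc
    simp only [Algebra.Generators.cotangentSpaceBasis_repr_one_tmul, map_smul, Module.Basis.repr_self,
      Finsupp.smul_apply, Finsupp.single_apply, smul_eq_mul, mul_ite, mul_one, mul_zero] at hrepr
    have hsum : (MvPolynomial.aeval G.val) ((MvPolynomial.pderiv j') (yk.1 : MvPolynomial (Fin n) A))
        = ∑ i, (MvPolynomial.aeval G.val) (cc i)
            * (MvPolynomial.aeval G.val) ((MvPolynomial.pderiv j') (f i)) := by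
      rw [← hcc, map_sum, map_sum]
      refine Finset.sum_congr rfl fun i _ => ?_
      rw [smul_eq_mul, MvPolynomial.pderiv_mul, map_add, map_mul, map_mul, hf0, mul_zero, zero_add]
    by_cases hjj : j = j'
    · rw [if_pos hjj] at hrepr ⊢
      rw [← hrepr]
      exact hsum
    · rw [if_neg hjj] at hrepr ⊢
      rw [← hrepr]
      exact hsum
  -- ## Valuation-theoretic contradiction
  -- `π = unit · πB^e`
  have hassoc : Associated (algebraMap A B π) (πB ^ e) := by
    rw [← Ideal.span_singleton_eq_span_singleton]
    have h1 : Ideal.span {algebraMap A B π}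
        = Ideal.map (algebraMap A B) (IsLocalRing.maximalIdeal A) := by
      rw [hπ.maximalIdeal_eq, Ideal.map_span, Set.image_singleton]
    rw [h1, he, hmB, Ideal.span_singleton_pow]
  obtain ⟨u, hu⟩ := hassoc
  obtain ⟨S, hS⟩ := Ideal.Quotient.mk_surjective (I := Ia) (φ πB)
  obtain ⟨W, hW⟩ := Ideal.Quotient.mk_surjective (I := Ia) (φ ↑u)
  obtain ⟨W', hW'⟩ := Ideal.Quotient.mk_surjective (I := Ia) (φ ↑u⁻¹)
  have hapos : (0 : WithTop ℚ) < (a : WithTop ℚ) := by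
    exact_mod_cast lt_trans one_pos ha
  have ha1 : (1 : WithTop ℚ) < (a : WithTop ℚ) := by exact_mod_cast ha
  -- `v W = 0`
  have hWW'mem : W * W' - 1 ∈ Ia := by
    rw [← Ideal.Quotient.eq_zero_iff_mem]
    have : mk' (W * W') = mk' 1 := by
      rw [map_mul, hW, hW', map_one, ← map_mul, Units.mul_inv, map_one]
    rw [map_sub, this, map_one, sub_self]
  have hWW' : (a : WithTop ℚ) ≤ v ((W : Ω) * (W' : Ω) - 1) := by
    have := (hmemIa _).mp hWW'mem
    simpa using this
  have hvW0 : v (W : Ω) = 0 := by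
    have h1 : v ((W : Ω) * (W' : Ω)) = 0 := by
      have heq : (W : Ω) * (W' : Ω) = 1 + ((W : Ω) * (W' : Ω) - 1) := by ring
      rw [heq, val_add_eq_of_lt'aux v hvtop hvmul hvadd ?_, val_one'aux v hvtop hvmul]
      rw [val_one'aux v hvtop hvmul]
      exact lt_of_lt_of_le hapos hWW'
    rw [hvmul] at h1
    have h2 : 0 ≤ v (W' : Ω) := W'.2
    have h3 : 0 ≤ v (W : Ω) := W.2
    refine le_antisymm ?_ h3
    calc v (W : Ω) ≤ v (W : Ω) + v (W' : Ω) := le_add_of_nonneg_right h2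
      _ = 0 := h1
  -- `e • v S = 1`
  have hπφ : mk' (algebraMap A O π) = φ (algebraMap A B π) := by
    rw [Ideal.Quotient.mk_algebraMap, AlgHom.commutes]
  have hπW : mk' (algebraMap A O π * W) = mk' (S ^ e) := by
    rw [map_mul, hπφ, hW, map_pow, hS, ← map_mul, ← map_pow]
    exact congrArg φ hu
  have hπWmem : algebraMap A O π * W - S ^ e ∈ Ia := Ideal.Quotient.eq.mp hπW
  have hπWv : (a : WithTop ℚ) ≤ v (algebraMap A Ω π * (W : Ω) - (S : Ω) ^ e) := by
    have h6 := (hmemIa _).mp hπWmem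
    have hcoe : ((algebraMap A O π * W - S ^ e : O) : Ω)
        = algebraMap A Ω π * (W : Ω) - (S : Ω) ^ e := by
      push_cast
      rfl
    rwa [hcoe] at h6
  have hvSe : v ((S : Ω) ^ e) = 1 := by
    have heq : (S : Ω) ^ e
        = algebraMap A Ω π * (W : Ω) + ((S : Ω) ^ e - algebraMap A Ω π * (W : Ω)) := by
      ring
    have hvπW : v (algebraMap A Ω π * (W : Ω)) = 1 := by
      rw [hvmul, hvπ, hvW0, add_zero]
    have hlt : v (algebraMap A Ω π * (W : Ω))
        < v ((S : Ω) ^ e - algebraMap A Ω π * (W : Ω)) := by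
      rw [hvπW]
      have : (S : Ω) ^ e - algebraMap A Ω π * (W : Ω)
          = -(algebraMap A Ω π * (W : Ω) - (S : Ω) ^ e) := by ring
      rw [this, val_neg'aux v hvtop hvmul]
      exact lt_of_lt_of_le ha1 hπWv
    rw [heq, val_add_eq_of_lt'aux v hvtop hvmul hvadd hlt, hvπW]
  have hSnsmul : e • v (S : Ω) = 1 := by
    rw [← val_pow'aux v hvtop hvmul]
    exact hvSe
  have he0 : e ≠ 0 := by
    intro h0
    rw [h0, zero_nsmul] at hSnsmul
    exact absurd hSnsmul (by norm_num)
  obtain ⟨q, hq⟩ : ∃ q : ℚ, v (S : Ω) = q := by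
    cases hvs : v (S : Ω) with
    | top =>
        rw [hvs, nsmul_top_aux he0] at hSnsmul
        exact absurd hSnsmul (by simp)
    | coe q => exact ⟨q, rfl⟩
  have heq1 : (e : ℚ) * q = 1 := by
    rw [hq, nsmul_coe_aux] at hSnsmul
    exact_mod_cast hSnsmul
  have hq0 : 0 ≤ q := by
    have h12 : (0 : WithTop ℚ) ≤ v (S : Ω) := S.2
    rw [hq] at h12
    exact_mod_cast h12
  -- the kernel vector of the Jacobian
  obtain ⟨z, hz0, hzM⟩ := (Matrix.exists_mulVec_eq_zero_iff
    (M := Matrix.of fun i j => MvPolynomial.aeval x (MvPolynomial.pderiv j (f i)))).mpr hdet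
  obtain ⟨j1, hj1⟩ := Function.ne_iff.mp hz0
  obtain ⟨j0, _, hj0min⟩ := Finset.exists_min_image Finset.univ (fun j => v (z j))
    ⟨j1, Finset.mem_univ j1⟩
  have hzj0 : z j0 ≠ 0 := by
    intro h0
    apply hj1
    have h7 := hj0min j1 (Finset.mem_univ j1)
    rw [h0, (hvtop 0).mpr rfl, top_le_iff] at h7
    exact (hvtop _).mp h7
  set y : Fin n → Ω := fun j => z j * (z j0)⁻¹ with hy
  have hyz : ∀ j, y j * z j0 = z j := by
    intro j
    rw [hy]
    field_simp
  have hy0 : ∀ j, 0 ≤ v (y j) := by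
    intro j
    by_contra hneg
    push_neg at hneg
    have hvz : v (z j) = v (y j) + v (z j0) := by
      rw [← hvmul, hyz j]
    have hj0top : v (z j0) ≠ ⊤ := fun h => hzj0 ((hvtop _).mp h)
    have h8 : v (z j) < 0 + v (z j0) := by
      rw [hvz]
      exact WithTop.add_lt_add_right hj0top hneg
    rw [zero_add] at h8
    exact absurd (hj0min j (Finset.mem_univ j)) (not_le.mpr h8)
  have hyj0 : y j0 = 1 := mul_inv_cancel₀ hzj0
  have hMy : ∀ i, ∑ j', MvPolynomial.aeval x (MvPolynomial.pderiv j' (f i)) * y j' = 0 := by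
    intro i
    have h1 : ∑ j', MvPolynomial.aeval x (MvPolynomial.pderiv j' (f i)) * z j' = 0 := by
      simpa [Matrix.mulVec, dotProduct] using congrFun hzM i
    have h2 : ∑ j', MvPolynomial.aeval x (MvPolynomial.pderiv j' (f i)) * y j'
        = (∑ j', MvPolynomial.aeval x (MvPolynomial.pderiv j' (f i)) * z j') * (z j0)⁻¹ := by
      rw [Finset.sum_mul]
      exact Finset.sum_congr rfl fun j' _ => by rw [hy]; ring
    rw [h2, h1, zero_mul]
  set Y : Fin n → O := fun j => ⟨y j, hy0 j⟩ with hY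
  have hrowO : ∀ i, (∑ j', (MvPolynomial.aeval X' (MvPolynomial.pderiv j' (f i)) : O) * Y j')
      = (0 : O) := by
    intro i
    apply Subtype.ext
    have hcoe : ((∑ j', (MvPolynomial.aeval X' (MvPolynomial.pderiv j' (f i)) : O) * Y j' : O) : Ω)
        = ∑ j', MvPolynomial.aeval x (MvPolynomial.pderiv j' (f i)) * y j' := by
      push_cast [hOval]
      rfl
    rw [hcoe, hMy i]
    rfl
  -- the contradiction
  obtain ⟨C, hC⟩ := hkey j0
  have hCR : ∀ j', (if j0 = j' then φ (πB ^ N) else 0)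
      = ∑ i, φ (C i) * mk' (MvPolynomial.aeval X' (MvPolynomial.pderiv j' (f i))) := by
    intro j'
    have h9 := congrArg φ (hC j')
    simpa [apply_ite φ, map_sum, map_mul, hφaeval, hψmk] using h9
  have hY1 : Y j0 = 1 := Subtype.ext (by rw [hY]; exact hyj0)
  have hfinal : φ (πB ^ N) = 0 := by
    have h1 : φ (πB ^ N) = ∑ j', (if j0 = j' then φ (πB ^ N) else 0) * mk' (Y j') := by
      simp only [ite_mul, zero_mul]
      rw [Finset.sum_ite_eq]
      simp [hY1]
    rw [h1]
    have h2 : ∀ j' : Fin n, (if j0 = j' then φ (πB ^ N) else 0) * mk' (Y j')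
        = (∑ i, φ (C i) * mk' (MvPolynomial.aeval X' (MvPolynomial.pderiv j' (f i))))
            * mk' (Y j') := by
      intro j'
      rw [← hCR j']
    rw [Finset.sum_congr rfl fun j' _ => h2 j']
    calc ∑ j', (∑ i, φ (C i) * mk' (MvPolynomial.aeval X' (MvPolynomial.pderiv j' (f i))))
          * mk' (Y j')
        = ∑ j', ∑ i, φ (C i) * mk' (MvPolynomial.aeval X' (MvPolynomial.pderiv j' (f i)))
          * mk' (Y j') := Finset.sum_congr rfl fun j' _ => Finset.sum_mul _ _ _
      _ = ∑ i, ∑ j', φ (C i) * mk' (MvPolynomial.aeval X' (MvPolynomial.pderiv j' (f i)))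
          * mk' (Y j') := Finset.sum_comm
      _ = ∑ i, φ (C i) * mk' (∑ j', (MvPolynomial.aeval X' (MvPolynomial.pderiv j' (f i)) : O)
          * Y j') := by
          refine Finset.sum_congr rfl fun i _ => ?_
          rw [map_sum, Finset.mul_sum]
          refine Finset.sum_congr rfl fun j' _ => ?_
          rw [map_mul, mul_assoc]
      _ = 0 := by simp [hrowO]
  -- conclude
  have hSN : S ^ N ∈ Ia := by
    rw [← Ideal.Quotient.eq_zero_iff_mem]
    show mk' (S ^ N) = 0
    rw [map_pow, hS, ← map_pow, hfinal]
  have hvSN : (a : WithTop ℚ) ≤ v ((S : Ω) ^ N) := by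
    have h13 := (hmemIa _).mp hSN
    have hcoe : ((S ^ N : O) : Ω) = (S : Ω) ^ N := by push_cast; rfl
    rwa [hcoe] at h13
  rw [val_pow'aux v hvtop hvmul, hq, nsmul_coe_aux] at hvSN
  have haN : a ≤ (N : ℚ) * q := by exact_mod_cast hvSN
  have hNlt : (N : ℚ) < (e : ℚ) * a := by
    rcases Nat.eq_zero_or_pos r with hr | hr
    · have hN0 : N = 0 := by rw [hN]; subst hr; simp
      rw [hN0]
      have he1 : (1 : ℚ) ≤ (e : ℚ) := by exact_mod_cast Nat.one_le_iff_ne_zero.mpr he0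
      push_cast
      nlinarith
    · have : Nonempty (Fin r) := ⟨⟨0, hr⟩⟩
      obtain ⟨i, _, hi⟩ := Finset.exists_mem_eq_sup Finset.univ Finset.univ_nonempty α
      rw [hN, hi]
      exact hα i
  have hqpos : 0 < q := by
    rcases eq_or_lt_of_le hq0 with h | h
    · rw [← h] at heq1; simp at heq1
    · exact h
  have hfin2 : (N : ℚ) * q < a := by
    have h10 := mul_lt_mul_of_pos_right hNlt hqpos
    have h11 : (e : ℚ) * a * q = a := by
      rw [mul_comm (e : ℚ) a, mul_assoc, heq1, mul_one]
    rw [h11] at h10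
    exact h10
  linarith
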